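/- Define W(δ, ω; α, β) = −2δ² + (α²−β²−δ²)²/(4β²) + 5(1−δ²) sin²ω ((α²−β²−δ²)²/(4β²δ²) − 1) for δ ∈ (0,1), β > 0. If α, β > 0 satisfy α² + 3β² < 1 and α ≠ β, then the point (δ, ω) = (√(3β²+α²), 0) is a critical point of W, and the determinant of the Hessian of W there equals 20(α²+3β²−1)(α²−β²)/β², which is negative when α > β and α²+3β² < 1. -/

import Mathlib

/-!
Write `W(δ, ω) = W(δ, 0) + c(δ) sin² ω`. Then `∂_ω W` vanishes on the whole line `ω = 0`, so the
mixed second derivative vanishes there and the Hessian at `A` is diagonal, with `∂²_ω W(δ, 0) = 2 c(δ)`.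
Along `ω = 0` one finds `∂_δ W = -δ (3β² + α² - δ²) / β²`, which vanishes at `δ_A` and has derivative
`2 δ_A² / β²` there. Since `α² - β² - δ_A² = -4β²`, `c(δ_A) = 5 (1 - δ_A²)(β² - α²) / δ_A²`, and the
product of the diagonal entries is the stated determinant.
-/

/-- The Lidov–Ziglin normalized quadrupolar Hamiltonian. -/
noncomputable def Wquad (α β δ ω : ℝ) : ℝ :=
  -2 * δ ^ 2 + (α ^ 2 - β ^ 2 - δ ^ 2) ^ 2 / (4 * β ^ 2) +
    5 * (1 - δ ^ 2) * Real.sin ω ^ 2 *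
      ((α ^ 2 - β ^ 2 - δ ^ 2) ^ 2 / (4 * β ^ 2 * δ ^ 2) - 1)

open Real

theorem deriv_const_add_mul_sin_sq (a c : ℝ) :
    deriv (fun ω => a + c * sin ω ^ 2) = fun ω => c * sin (2 * ω) := by
  funext ω
  refine ((((hasDerivAt_sin ω).pow 2).const_mul c).const_add a).deriv.trans ?_
  rw [sin_two_mul]
  ring

theorem deriv_mul_sin_two_mul (c ω : ℝ) :
    deriv (fun ω => c * sin (2 * ω)) ω = 2 * c * cos (2 * ω) := by
  refine ((((hasDerivAt_id ω).const_mul 2).sin).const_mul c).deriv.trans ?_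
  simp only [id]
  ring

namespace Wquad

noncomputable def sinSqCoeff (α β δ : ℝ) : ℝ :=
  5 * (1 - δ ^ 2) * ((α ^ 2 - β ^ 2 - δ ^ 2) ^ 2 / (4 * β ^ 2 * δ ^ 2) - 1)

theorem eq_add_sinSqCoeff_mul (α β δ ω : ℝ) :
    Wquad α β δ ω = Wquad α β δ 0 + sinSqCoeff α β δ * sin ω ^ 2 := by
  simp only [Wquad, sinSqCoeff, sin_zero]
  ring

theorem deriv_omega (α β δ : ℝ) :
    deriv (fun ω => Wquad α β δ ω) = fun ω => sinSqCoeff α β δ * sin (2 * ω) := by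
  rw [funext (eq_add_sinSqCoeff_mul α β δ)]
  exact deriv_const_add_mul_sin_sq _ _

theorem deriv_omega_zero (α β δ : ℝ) : deriv (fun ω => Wquad α β δ ω) 0 = 0 := by
  simp [deriv_omega]

theorem deriv_omega_omega_zero (α β δ : ℝ) :
    deriv (fun ω => deriv (fun ω' => Wquad α β δ ω') ω) 0 = 2 * sinSqCoeff α β δ := by
  simp [deriv_omega, deriv_mul_sin_two_mul]

theorem hasDerivAt_delta {α β : ℝ} (hβ : β ≠ 0) (δ : ℝ) :
    HasDerivAt (fun δ => Wquad α β δ 0) (-δ * (3 * β ^ 2 + α ^ 2 - δ ^ 2) / β ^ 2) δ := by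
  have h := ((hasDerivAt_pow 2 δ).const_mul (-2)).add
    ((((hasDerivAt_pow 2 δ).const_sub (α ^ 2 - β ^ 2)).pow 2).div_const (4 * β ^ 2))
  simp only [Wquad, sin_zero]
  refine (h.congr_deriv ?_).congr_of_eventuallyEq (.of_forall fun δ => ?_)
  · field_simp; ring
  · simp

theorem deriv_delta {α β : ℝ} (hβ : β ≠ 0) :
    deriv (fun δ => Wquad α β δ 0) = fun δ => -δ * (3 * β ^ 2 + α ^ 2 - δ ^ 2) / β ^ 2 :=
  funext fun δ => (hasDerivAt_delta hβ δ).deriv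

theorem deriv_delta_delta {α β : ℝ} (hβ : β ≠ 0) (δ : ℝ) :
    deriv (fun δ => deriv (fun δ' => Wquad α β δ' 0) δ) δ =
      -(3 * β ^ 2 + α ^ 2 - 3 * δ ^ 2) / β ^ 2 := by
  rw [deriv_delta hβ]
  have h : HasDerivAt (fun δ => -δ * (3 * β ^ 2 + α ^ 2 - δ ^ 2) / β ^ 2)
      (-(3 * β ^ 2 + α ^ 2 - 3 * δ ^ 2) / β ^ 2) δ :=
    (((hasDerivAt_id δ).neg.mul ((hasDerivAt_pow 2 δ).const_sub
      (3 * β ^ 2 + α ^ 2))).div_const (β ^ 2)).congr_deriv (by simp; ring)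
  exact h.deriv

theorem sinSqCoeff_of_sq_eq {α β δ : ℝ} (hβ : β ≠ 0) (hδ : δ ^ 2 = 3 * β ^ 2 + α ^ 2) :
    sinSqCoeff α β δ = 5 * (1 - δ ^ 2) * (β ^ 2 - α ^ 2) / δ ^ 2 := by
  have hδ0 : δ ≠ 0 := by
    rintro rfl
    exact (by positivity : 3 * β ^ 2 + α ^ 2 ≠ 0) (hδ.symm.trans (zero_pow two_ne_zero))
  have : α ^ 2 - β ^ 2 - δ ^ 2 = -(4 * β ^ 2) := by rw [hδ]; ring
  rw [sinSqCoeff, this]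
  field_simp
  linear_combination (δ ^ 2 - 1) * hδ

end Wquad

theorem singularity_A_hyperbolic_general
    (α β : ℝ) (hβ : 0 < β) (h1 : α ^ 2 + 3 * β ^ 2 < 1)
    (δA : ℝ) (hδA : δA = Real.sqrt (3 * β ^ 2 + α ^ 2)) :
    deriv (fun δ => Wquad α β δ 0) δA = 0 ∧
    deriv (fun ω => Wquad α β δA ω) 0 = 0 ∧
    (deriv (fun δ => deriv (fun δ' => Wquad α β δ' 0) δ) δA) *
        (deriv (fun ω => deriv (fun ω' => Wquad α β δA ω') ω) 0) -
      (deriv (fun δ => deriv (fun ω => Wquad α β δ ω) 0) δA) ^ 2 =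
      20 * (α ^ 2 + 3 * β ^ 2 - 1) * (α ^ 2 - β ^ 2) / β ^ 2 ∧
    (β < α → 20 * (α ^ 2 + 3 * β ^ 2 - 1) * (α ^ 2 - β ^ 2) / β ^ 2 < 0) := by
  have hβ0 : β ≠ 0 := hβ.ne'
  have hδA2 : δA ^ 2 = 3 * β ^ 2 + α ^ 2 := by
    rw [hδA]; exact Real.sq_sqrt (by positivity)
  have hs : 3 * β ^ 2 + α ^ 2 ≠ 0 := by positivity
  refine ⟨?_, Wquad.deriv_omega_zero α β δA, ?_, fun hβα => ?_⟩
  · simp only [Wquad.deriv_delta hβ0, hδA2, sub_self, mul_zero, zero_div]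
  · simp only [Wquad.deriv_delta_delta hβ0, Wquad.deriv_omega_omega_zero,
      Wquad.sinSqCoeff_of_sq_eq hβ0 hδA2, Wquad.deriv_omega_zero, deriv_const, hδA2]
    field_simp
    ring
  · have hαβ : 0 < α ^ 2 - β ^ 2 := by nlinarith
    exact div_neg_of_neg_of_pos (by nlinarith) (by positivity)

theorem singularity_A_hyperbolic
    (α β : ℝ) (hα : 0 < α) (hβ : 0 < β) (h1 : α ^ 2 + 3 * β ^ 2 < 1) (hαβ : α ≠ β)
    (δA : ℝ) (hδA : δA = Real.sqrt (3 * β ^ 2 + α ^ 2)) :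
    deriv (fun δ => Wquad α β δ 0) δA = 0 ∧
    deriv (fun ω => Wquad α β δA ω) 0 = 0 ∧
    (deriv (fun δ => deriv (fun δ' => Wquad α β δ' 0) δ) δA) *
        (deriv (fun ω => deriv (fun ω' => Wquad α β δA ω') ω) 0) -
      (deriv (fun δ => deriv (fun ω => Wquad α β δ ω) 0) δA) ^ 2 =
      20 * (α ^ 2 + 3 * β ^ 2 - 1) * (α ^ 2 - β ^ 2) / β ^ 2 ∧
    (β < α → 20 * (α ^ 2 + 3 * β ^ 2 - 1) * (α ^ 2 - β ^ 2) / β ^ 2 < 0) :=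
  singularity_A_hyperbolic_general α β hβ h1 δA hδA
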